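/- In the Cartesian tree of an array A of distinct values, for any indices i ≤ j, the answer to the range minimum query RMQ(i,j) is the inorder rank of the lowest common ancestor of the nodes with inorder ranks i and j. -/

import Mathlib

inductive BT where
  | leaf : BT
  | node : BT → BT → BT
deriving DecidableEq

namespace BT

/-- Number of nodes. -/
def size : BT → ℕ
  | leaf => 0
  | node l r => l.size + r.size + 1

/-- Inorder list of node positions (paths from the root; `false` = left step). -/
def inList : BT → List (List Bool)
  | leaf => []
  | node l r => (l.inList).map (List.cons false) ++ [] :: (r.inList).map (List.cons true)

/-- Preorder list of node positions. -/
def preList : BT → List (List Bool)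
  | leaf => []
  | node l r => [] :: ((l.preList).map (List.cons false) ++ (r.preList).map (List.cons true))

/-- Subtree rooted at a given position, if the position is valid. -/
def subtree? : BT → List Bool → Option BT
  | t, [] => some t
  | leaf, _ :: _ => none
  | node l r, b :: p => if b then r.subtree? p else l.subtree? p

/-- Size of the left spine (maximal path following left children, top node included). -/
def Lspine : BT → ℕ
  | leaf => 0
  | node l _ => l.Lspine + 1

/-- Size of the right spine. -/
def Rspine : BT → ℕ
  | leaf => 0
  | node _ r => r.Rspine + 1

/-- Size of the left inner spine of the root: right spine of the left child. -/
def lv : BT → ℕ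
  | leaf => 0
  | node l _ => l.Rspine

/-- Size of the right inner spine of the root: left spine of the right child. -/
def rv : BT → ℕ
  | leaf => 0
  | node _ r => r.Lspine

/-- Sum of `f` over all (sub)trees rooted at nodes of the tree. -/
def sumNodes (f : BT → ℕ) : BT → ℕ
  | leaf => 0
  | node l r => f (node l r) + sumNodes f l + sumNodes f r

/-- Number of leaf nodes (nodes with no children). -/
def leaves : BT → ℕ
  | leaf => 0
  | node leaf leaf => 1
  | node l r => leaves l + leaves r

end BT

/-- Longest common prefix of two paths: the LCA of two positions in a binary tree. -/
def lcp : List Bool → List Bool → List Bool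
  | a :: p, b :: q => if a = b then a :: lcp p q else []
  | _, _ => []

/-- Index of the minimum element of a list (0 if empty). -/
def minIdx {α : Type*} [LinearOrder α] (l : List α) : ℕ :=
  match l.argmin id with
  | none => 0
  | some a => l.idxOf a

/-- Cartesian tree construction with fuel. -/
def cartesianAux {α : Type*} [LinearOrder α] : ℕ → List α → BT
  | 0, _ => .leaf
  | _ + 1, [] => .leaf
  | n + 1, l@(_ :: _) =>
      .node (cartesianAux n (l.take (minIdx l))) (cartesianAux n (l.drop (minIdx l + 1)))

/-- The Cartesian tree of a list: root at the position of the minimum,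
recursively built on the prefix before and the suffix after the minimum. -/
def cartesian {α : Type*} [LinearOrder α] (l : List α) : BT :=
  cartesianAux l.length l

/-- `k` is the position of the minimum of `A` on the range `[i, j]`. -/
def isArgmin {α : Type*} [LinearOrder α] {n : ℕ} (A : Fin n → α) (i j k : Fin n) : Prop :=
  i ≤ k ∧ k ≤ j ∧ ∀ m, i ≤ m → m ≤ j → A k ≤ A m

/-- `k` is the position of the second smallest element of `A` on the range `[i, j]`. -/
def isSecondMin {α : Type*} [LinearOrder α] {n : ℕ} (A : Fin n → α) (i j k : Fin n) : Prop :=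
  i ≤ k ∧ k ≤ j ∧
    ∃ m, isArgmin A i j m ∧ k ≠ m ∧ ∀ l, i ≤ l → l ≤ j → l ≠ m → A k ≤ A l

/-- The node with inorder number `i` in `t` has a left child. -/
def hasLeftChildAt (t : BT) (i : ℕ) : Prop :=
  ∃ (p : List Bool) (ll lr r : BT),
    t.inList[i]? = some p ∧ t.subtree? p = some (.node (.node ll lr) r)

/-!
The root of the Cartesian tree of `l` is the position `m` of the minimum of `l`. If `i ≤ m ≤ j`,
then `m` is the range minimum, and the nodes `i` and `j` are the root or lie in different subtrees
of it, so their LCA is the root. Otherwise `[i, j]` lies on one side of `m`, and both the range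
minimum and the LCA are found recursively in the Cartesian tree of that side. Nodes are their
root paths, so the LCA is the longest common prefix, and since the inorder list of paths has no
duplicates, the inorder rank of the `k`-th path is `k`.
-/

@[simp] theorem lcp_nil_left (q : List Bool) : lcp [] q = [] := by cases q <;> rfl

@[simp] theorem lcp_nil_right (p : List Bool) : lcp p [] = [] := by cases p <;> rfl

@[simp] theorem lcp_cons_self (a : Bool) (p q : List Bool) :
    lcp (a :: p) (a :: q) = a :: lcp p q := by
  simp [lcp]

namespace BT

theorem length_inList : ∀ t : BT, t.inList.length = t.size
  | leaf => rfl
  | node l r => by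
    simp only [inList, size, List.length_append, List.length_map, List.length_cons,
      length_inList l, length_inList r]
    omega

theorem nodup_inList : ∀ t : BT, t.inList.Nodup
  | leaf => List.nodup_nil
  | node l r => by
    rw [inList, List.nodup_append, List.nodup_cons]
    refine ⟨(nodup_inList l).map List.cons_injective,
      ⟨by simp, (nodup_inList r).map List.cons_injective⟩, ?_⟩
    simp

variable {l r : BT} {i j : ℕ}

theorem getD_inList_node_of_lt (hi : i < l.size) :
    (node l r).inList.getD i [] = false :: l.inList.getD i [] := by
  rw [← length_inList] at hi
  simp [inList, List.getElem?_append_left, hi]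

theorem getD_inList_node_of_eq (hi : i = l.size) : (node l r).inList.getD i [] = [] := by
  simp [inList, hi, ← length_inList]

theorem getD_inList_node_of_gt (hi : l.size < i) (hi' : i < (node l r).size) :
    (node l r).inList.getD i [] = true :: r.inList.getD (i - l.size - 1) [] := by
  obtain ⟨d, rfl⟩ : ∃ d, i = l.size + 1 + d := ⟨i - l.size - 1, by omega⟩
  have hd : d < r.inList.length := by rw [length_inList]; simp only [size] at hi'; omega
  rw [inList, List.getD_eq_getElem?_getD,
    List.getElem?_append_right (by rw [List.length_map, length_inList]; omega)]
  simp [length_inList, add_assoc, add_comm 1 d, List.getElem?_eq_getElem hd]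

theorem lcp_getD_inList_node (hi : i ≤ l.size) (hj : l.size ≤ j)
    (hj' : j < (node l r).size) :
    lcp ((node l r).inList.getD i []) ((node l r).inList.getD j []) = [] := by
  rcases hi.lt_or_eq with hi | rfl
  · rw [getD_inList_node_of_lt hi]
    rcases hj.lt_or_eq with hj | rfl
    · rw [getD_inList_node_of_gt hj hj']
      rfl
    · rw [getD_inList_node_of_eq rfl, lcp_nil_right]
  · rw [getD_inList_node_of_eq rfl, lcp_nil_left]

end BT

section Cartesian

variable {α : Type*} [LinearOrder α]

theorem minIdx_lt_length {l : List α} (h : l ≠ []) : minIdx l < l.length := by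
  obtain ⟨m, hm⟩ : ∃ m, l.argmin id = some m :=
    Option.ne_none_iff_exists'.mp (List.argmin_eq_none.not.mpr h)
  rw [minIdx, hm]
  exact List.idxOf_lt_length_iff.mpr (List.argmin_mem hm)

theorem getElem_minIdx_le {l : List α} (h : l ≠ []) {i : ℕ} (hi : i < l.length) :
    l[minIdx l]'(minIdx_lt_length h) ≤ l[i] := by
  obtain ⟨m, hm⟩ : ∃ m, l.argmin id = some m :=
    Option.ne_none_iff_exists'.mp (List.argmin_eq_none.not.mpr h)
  have hmin : l[minIdx l]'(minIdx_lt_length h) = m := by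
    simp only [minIdx, hm]
    exact List.getElem_idxOf _
  exact hmin ▸ List.le_of_mem_argmin (l.getElem_mem hi) hm

theorem cartesianAux_congr : ∀ {f g : ℕ} {l : List α}, l.length ≤ f → l.length ≤ g →
    cartesianAux f l = cartesianAux g l
  | 0, g, l, hf, _ => by rw [List.eq_nil_of_length_eq_zero (Nat.le_zero.mp hf)]; cases g <;> rfl
  | _ + 1, 0, l, _, hg => by rw [List.eq_nil_of_length_eq_zero (Nat.le_zero.mp hg)]; rfl
  | _ + 1, _ + 1, [], _, _ => rfl
  | f + 1, g + 1, x :: xs, hf, hg => by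
    have hm := minIdx_lt_length (List.cons_ne_nil x xs)
    simp only [List.length_cons] at hm hf hg
    simp only [cartesianAux]
    rw [cartesianAux_congr (g := g) (by simp; omega) (by simp; omega),
      cartesianAux_congr (f := f) (g := g) (by simp; omega) (by simp; omega)]

theorem cartesian_eq_node {l : List α} (h : l ≠ []) :
    cartesian l = .node (cartesian (l.take (minIdx l))) (cartesian (l.drop (minIdx l + 1))) := by
  have hm := minIdx_lt_length h
  obtain ⟨x, xs, rfl⟩ := List.exists_cons_of_ne_nil h
  rw [List.length_cons] at hm
  rw [cartesian, List.length_cons, cartesianAux, cartesian, cartesian]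
  congr 1 <;> exact cartesianAux_congr
    (by simp only [List.length_take, List.length_drop, List.length_cons]; omega) le_rfl

theorem size_cartesian (l : List α) : (cartesian l).size = l.length := by
  rcases eq_or_ne l [] with rfl | h
  · rfl
  have hm := minIdx_lt_length h
  rw [cartesian_eq_node h, BT.size, size_cartesian, size_cartesian]
  simp only [List.length_take, List.length_drop]
  omega
termination_by l.length
decreasing_by all_goals simp; omega

theorem lcp_getD_inList_cartesian {l : List α} (hl : l.Nodup) {i j k : ℕ} (hik : i ≤ k)
    (hkj : k ≤ j) (hj : j < l.length)
    (hmin : ∀ m (hm : m < l.length), i ≤ m → m ≤ j → l[k] ≤ l[m]) :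
    lcp ((cartesian l).inList.getD i []) ((cartesian l).inList.getD j []) =
      (cartesian l).inList.getD k [] := by
  have hne : l ≠ [] := List.ne_nil_of_length_pos (by omega)
  have hm := minIdx_lt_length hne
  have hsize : (cartesian (l.take (minIdx l))).size = minIdx l := by
    simp [size_cartesian, hm.le]
  have hsize' := size_cartesian l
  rw [cartesian_eq_node hne] at hsize' ⊢
  by_cases hleft : j < minIdx l
  · rw [BT.getD_inList_node_of_lt (by omega), BT.getD_inList_node_of_lt (by omega),
      BT.getD_inList_node_of_lt (by omega), lcp_cons_self,
      lcp_getD_inList_cartesian (hl.sublist (List.take_sublist _ l)) hik hkj (by simp; omega)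
        (fun m hm him hmj => by simpa using hmin m (by simp at hm; omega) him hmj)]
  by_cases hright : minIdx l < i
  · rw [BT.getD_inList_node_of_gt (by omega) (by omega),
      BT.getD_inList_node_of_gt (by omega) (by omega),
      BT.getD_inList_node_of_gt (by omega) (by omega), lcp_cons_self, hsize,
      lcp_getD_inList_cartesian (hl.sublist (List.drop_sublist _ l))
        (i := i - minIdx l - 1) (k := k - minIdx l - 1) (j := j - minIdx l - 1)
        (by omega) (by omega) (by simp; omega)]
    intro m hm him hmj
    have hk : minIdx l + 1 + (k - minIdx l - 1) = k := by omega
    simp only [List.getElem_drop, hk]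
    exact hmin _ (by simp at hm; omega) (by omega) (by omega)
  have hkm : k = minIdx l := hl.getElem_inj_iff.mp
    (le_antisymm (hmin _ hm (by omega) (by omega)) (getElem_minIdx_le hne _))
  rw [hkm, BT.lcp_getD_inList_node (by omega) (by omega) (by omega),
    BT.getD_inList_node_of_eq hsize.symm]
termination_by l.length
decreasing_by all_goals simp; omega

end Cartesian

theorem stmt1_general {α : Type*} [LinearOrder α] {n : ℕ} (A : Fin n → α)
    (hA : Function.Injective A) (i j k : Fin n)
    (hk : isArgmin A i j k) :
    (cartesian (List.ofFn A)).inList.idxOf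
        (lcp ((cartesian (List.ofFn A)).inList.getD (i : ℕ) [])
             ((cartesian (List.ofFn A)).inList.getD (j : ℕ) [])) = (k : ℕ) := by
  obtain ⟨hik, hkj, hmin⟩ := hk
  have hk : (k : ℕ) < (cartesian (List.ofFn A)).inList.length := by
    simp [BT.length_inList, size_cartesian]
  rw [lcp_getD_inList_cartesian (List.nodup_ofFn.mpr hA) hik hkj (by simp)
      (fun m hm him hmj => by simpa using hmin ⟨m, by simpa using hm⟩ him hmj),
    List.getD_eq_getElem _ _ hk, (BT.nodup_inList _).idxOf_getElem]

/-- In the Cartesian tree of an array of distinct values, for `i ≤ j`, the answer to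
`RMQ(i,j)` is the inorder rank of the LCA of the nodes with inorder ranks `i` and `j`. -/
theorem stmt1 {α : Type*} [LinearOrder α] {n : ℕ} (A : Fin n → α)
    (hA : Function.Injective A) (i j k : Fin n) (hij : i ≤ j)
    (hk : isArgmin A i j k) :
    (cartesian (List.ofFn A)).inList.idxOf
        (lcp ((cartesian (List.ofFn A)).inList.getD (i : ℕ) [])
             ((cartesian (List.ofFn A)).inList.getD (j : ℕ) [])) = (k : ℕ) :=
  stmt1_general A hA i j k hk
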